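/- arXiv:1309.0597 — 4 statements merged into one kernel-verified Lean document; each statement's English description precedes it below -/
import Mathlib

section
/- Let k be a positive integer and let γ be a real number with 12k²(k−1)²/(2k−1) < γ < 12k²(k+1)²/(2k+1). Let u : (0,1) → {−1,1} be piecewise constant with finitely many jumps, i.e. there exist points 0 = t₀ < t₁ < … < t_j < t_{j+1} = 1 such that u is constant on each interval (t_i, t_{i+1}) and takes different values on adjacent intervals, and assume ∫₀¹ u(t) dt = 0. Set w(y) = ∫₀^y u(t) dt. Then j + γ ∫₀¹ w(y)² dy ≥ k + γ/(12k²), with equality if and only if u = u_k almost everywhere or u = −u_k almost everywhere. -/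
/-!
On an interval of constancy of `u` of length `ℓ`, the primitive `w` is affine with slope `±1`, so
that interval contributes `ℓ m² + ℓ³ / 12` to `∫ w²`, where `m` is the value of `w` at its
midpoint; since `w` vanishes at both ends of `[0, 1]`, `m = ±ℓ / 2` on the two outer intervals.
Bounding each contribution from below by the tangent line of `ℓ ↦ ℓ³` at the lamellar length
(`1 / (2j)` for the outer intervals, `1 / j` for the inner ones) gives `∫ w² ≥ 1 / (12 j²)`,
with equality only for the lamellar partition. The window for `γ` is exactly what makes
`n ↦ n + γ / (12 n²)` uniquely minimal at `n = k` among positive integers. Conversely, if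
`u = ±u_k` a.e., every jump of `u` is a jump of `u_k`, so `j ≤ k`, while `∫ w² = 1 / (12 k²)`
and the lower bound force `j ≥ k`.
-/

open MeasureTheory intervalIntegral

/-- The lamellar configuration `u_k`: equals `(-1)^j` on `(y_j, y_{j+1})` where
`y_j = (2j-1)/(2k)`, `y_0 = 0`, `y_{k+1} = 1`. -/
noncomputable def uk (k : ℕ) (t : ℝ) : ℝ := (-1 : ℝ) ^ ⌊(k : ℝ) * t + 1 / 2⌋

open Set

structure IsPartition (j : ℕ) (t : ℕ → ℝ) : Prop where
  zero : t 0 = 0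
  last : t (j + 1) = 1
  lt_succ : ∀ i ≤ j, t i < t (i + 1)

namespace IsPartition

variable {j : ℕ} {t : ℕ → ℝ}

lemma strictMonoOn (ht : IsPartition j t) : StrictMonoOn t (Iic (j + 1)) :=
  strictMonoOn_Iic_of_lt_succ fun m hm => ht.lt_succ m (by omega)

lemma mem_Icc (ht : IsPartition j t) {i : ℕ} (hi : i ≤ j + 1) : t i ∈ Icc 0 1 := by
  have hmono := ht.strictMonoOn.monotoneOn
  exact ⟨ht.zero ▸ hmono (by simp) (by simpa using hi) i.zero_le,
    ht.last ▸ hmono (by simpa using hi) (by simp) hi⟩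

lemma mem_Ioo (ht : IsPartition j t) {i : ℕ} (hi0 : 0 < i) (hi : i ≤ j) : t i ∈ Ioo 0 1 :=
  ⟨ht.zero ▸ ht.strictMonoOn (by simp) (by simp only [mem_Iic]; omega) hi0,
    ht.last ▸ ht.strictMonoOn (by simp only [mem_Iic]; omega) (by simp) (by omega)⟩

lemma Icc_subset (ht : IsPartition j t) {i : ℕ} (hi : i ≤ j) :
    Icc (t i) (t (i + 1)) ⊆ Icc 0 1 :=
  Icc_subset_Icc (ht.mem_Icc (by omega)).1 (ht.mem_Icc (by omega)).2

lemma Ioo_subset (ht : IsPartition j t) {i : ℕ} (hi : i ≤ j) :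
    Ioo (t i) (t (i + 1)) ⊆ Ioo 0 1 :=
  Ioo_subset_Ioo (ht.mem_Icc (by omega)).1 (ht.mem_Icc (by omega)).2

lemma sum_sub (ht : IsPartition j t) : ∑ i ∈ Finset.range (j + 1), (t (i + 1) - t i) = 1 := by
  rw [Finset.sum_range_sub, ht.last, ht.zero, sub_zero]

lemma exists_mem_Ico (ht : IsPartition j t) {s : ℝ} (hs : s ∈ Ico 0 1) :
    ∃ i ≤ j, t i ≤ s ∧ s < t (i + 1) := by
  classical
  set i := Nat.findGreatest (fun i => t i ≤ s) j
  refine ⟨i, Nat.findGreatest_le j, Nat.findGreatest_spec (P := fun i => t i ≤ s)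
    j.zero_le (ht.zero ▸ hs.1), ?_⟩
  rcases (Nat.findGreatest_le (P := fun i => t i ≤ s) j).lt_or_eq with hij | hij
  · exact lt_of_not_ge (Nat.findGreatest_is_greatest (Nat.lt_succ_self i) hij)
  · simp only [i, hij, ht.last]
    exact hs.2

lemma ae_restrict_of_forall_Ioo (ht : IsPartition j t) {p : ℝ → Prop}
    (h : ∀ i ≤ j, ∀ s ∈ Ioo (t i) (t (i + 1)), p s) :
    ∀ᵐ s ∂volume.restrict (Ioo 0 1), p s := by
  filter_upwards [ae_restrict_of_ae ((countable_range t).ae_notMem volume),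
    ae_restrict_mem measurableSet_Ioo] with s hst hs
  obtain ⟨i, hi, hts, hst'⟩ := ht.exists_mem_Ico (Ioo_subset_Ico_self hs)
  exact h i hi s ⟨hts.lt_of_ne fun h => hst ⟨i, h⟩, hst'⟩

end IsPartition

lemma exists_mem_Ioo_of_ae_restrict {a b : ℝ} (hab : a < b) {p : ℝ → Prop}
    (h : ∀ᵐ s ∂volume.restrict (Ioo a b), p s) : ∃ s ∈ Ioo a b, p s :=
  haveI : (ae (volume.restrict (Ioo a b))).NeBot := ae_restrict_neBot.2 (by simp [hab])
  ((ae_restrict_mem measurableSet_Ioo).and h).exists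

section StepFunction

variable {u : ℝ → ℝ} {a b c : ℝ}

lemma intervalIntegrable_of_ae_eq_const (hab : a ≤ b)
    (hu : ∀ᵐ s ∂volume.restrict (Ioo a b), u s = c) : IntervalIntegrable u volume a b := by
  rw [intervalIntegrable_iff_integrableOn_Ioo_of_le hab]
  exact (integrableOn_const (by simp)).congr_fun_ae (Filter.EventuallyEq.symm hu)

lemma integral_of_ae_eq_const (hab : a ≤ b)
    (hu : ∀ᵐ s ∂volume.restrict (Ioo a b), u s = c) : ∫ s in a..b, u s = c * (b - a) := by
  rw [integral_of_le hab, integral_Ioc_eq_integral_Ioo, integral_congr_ae hu]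
  simp [hab, mul_comm]

lemma integral_sq_affine (a b x z : ℝ) :
    ∫ y in x..z, (a + b * (y - x)) ^ 2 =
      (z - x) * (a + b * (z - x) / 2) ^ 2 + b ^ 2 * (z - x) ^ 3 / 12 := by
  have h : ∀ y, (a + b * (y - x)) ^ 2 = a ^ 2 + 2 * a * b * (y - x) + b ^ 2 * (y - x) ^ 2 :=
    fun y => by ring
  have hint : ∀ f : ℝ → ℝ, Continuous f → IntervalIntegrable f volume x z :=
    fun f hf => hf.intervalIntegrable x z
  simp only [h]
  rw [intervalIntegral.integral_add (hint _ (by fun_prop)) (hint _ (by fun_prop)),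
    intervalIntegral.integral_add (hint _ (by fun_prop)) (hint _ (by fun_prop))]
  simp only [intervalIntegral.integral_const_mul, intervalIntegral.integral_const,
    intervalIntegral.integral_comp_sub_right (fun y => y),
    intervalIntegral.integral_comp_sub_right (fun y => y ^ 2), integral_pow, integral_id,
    smul_eq_mul, sub_self]
  ring

namespace IsPartition

variable {j : ℕ} {t ε : ℕ → ℝ}

lemma intervalIntegrable (ht : IsPartition j t)
    (hu : ∀ i ≤ j, ∀ᵐ s ∂volume.restrict (Ioo (t i) (t (i + 1))), u s = ε i) :
    IntervalIntegrable u volume 0 1 := by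
  rw [← ht.zero, ← ht.last]
  exact IntervalIntegrable.trans_iterate fun i hi =>
    intervalIntegrable_of_ae_eq_const (ht.lt_succ i (by omega)).le (hu i (by omega))

lemma primitive_eq (ht : IsPartition j t)
    (hu : ∀ i ≤ j, ∀ᵐ s ∂volume.restrict (Ioo (t i) (t (i + 1))), u s = ε i)
    {i : ℕ} (hi : i ≤ j) {y : ℝ} (hy : y ∈ Icc (t i) (t (i + 1))) :
    ∫ s in 0..y, u s = (∫ s in 0..t i, u s) + ε i * (y - t i) := by
  have hsub : ∀ {x}, x ∈ Icc (t i) (t (i + 1)) → uIcc 0 x ⊆ uIcc 0 1 := fun hx =>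
    uIcc_subset_uIcc left_mem_uIcc (by simpa using ht.Icc_subset hi hx)
  have hy' := ae_restrict_of_ae_restrict_of_subset (Ioo_subset_Ioo_right hy.2) (hu i hi)
  rw [← integral_add_adjacent_intervals ((ht.intervalIntegrable hu).mono_set
    (hsub (left_mem_Icc.2 (ht.lt_succ i hi).le))) (intervalIntegrable_of_ae_eq_const hy.1 hy'),
    integral_of_ae_eq_const hy.1 hy']

lemma integral_sq_primitive (ht : IsPartition j t)
    (hu : ∀ i ≤ j, ∀ᵐ s ∂volume.restrict (Ioo (t i) (t (i + 1))), u s = ε i) :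
    ∫ y in 0..1, (∫ s in 0..y, u s) ^ 2 = ∑ i ∈ Finset.range (j + 1),
      ((t (i + 1) - t i) * ((∫ s in 0..t i, u s) + ε i * (t (i + 1) - t i) / 2) ^ 2 +
        ε i ^ 2 * (t (i + 1) - t i) ^ 3 / 12) := by
  have hcont : ContinuousOn (fun y => (∫ s in 0..y, u s) ^ 2) (uIcc 0 1) :=
    (continuousOn_primitive_interval' (ht.intervalIntegrable hu) left_mem_uIcc).pow 2
  have hpiece : ∀ i ≤ j, uIcc (t i) (t (i + 1)) ⊆ uIcc 0 1 := fun i hi => by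
    simpa [uIcc_of_le (ht.lt_succ i hi).le] using ht.Icc_subset hi
  have hsum := sum_integral_adjacent_intervals (μ := volume) fun i (hi : i < j + 1) =>
    (hcont.mono (hpiece i (by omega))).intervalIntegrable
  rw [ht.zero, ht.last] at hsum
  rw [← hsum]
  refine Finset.sum_congr rfl fun i hi => ?_
  have hi : i ≤ j := Finset.mem_range_succ_iff.1 hi
  rw [← integral_sq_affine, integral_congr fun y hy => ?_]
  rw [uIcc_of_le (ht.lt_succ i hi).le] at hy
  simp only [ht.primitive_eq hu hi hy]

lemma integral_sq_primitive_of_sq_eq_one (ht : IsPartition j t)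
    (hu : ∀ i ≤ j, ∀ᵐ s ∂volume.restrict (Ioo (t i) (t (i + 1))), u s = ε i)
    (hε : ∀ i ≤ j, ε i ^ 2 = 1) :
    ∫ y in 0..1, (∫ s in 0..y, u s) ^ 2 = ∑ i ∈ Finset.range (j + 1),
      ((t (i + 1) - t i) * ((∫ s in 0..t i, u s) + ε i * (t (i + 1) - t i) / 2) ^ 2 +
        (t (i + 1) - t i) ^ 3 / 12) := by
  rw [ht.integral_sq_primitive hu]
  refine Finset.sum_congr rfl fun i hi => ?_
  rw [hε i (Finset.mem_range_succ_iff.1 hi), one_mul]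

lemma sq_first_midpoint (ht : IsPartition j t) (hε : ε 0 ^ 2 = 1) :
    ((∫ s in 0..t 0, u s) + ε 0 * (t 1 - t 0) / 2) ^ 2 = (t 1 - t 0) ^ 2 / 4 := by
  rw [ht.zero, integral_same]
  linear_combination (t 1 - 0) ^ 2 / 4 * hε

lemma sq_last_midpoint (ht : IsPartition j t)
    (hu : ∀ i ≤ j, ∀ᵐ s ∂volume.restrict (Ioo (t i) (t (i + 1))), u s = ε i)
    (hε : ε j ^ 2 = 1) (hmean : ∫ s in 0..1, u s = 0) :
    ((∫ s in 0..t j, u s) + ε j * (t (j + 1) - t j) / 2) ^ 2 = (t (j + 1) - t j) ^ 2 / 4 := by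
  have h := ht.primitive_eq hu le_rfl (right_mem_Icc.2 (ht.lt_succ j le_rfl).le)
  rw [ht.last, hmean] at h
  rw [ht.last, show ∫ s in 0..t j, u s = -(ε j * (1 - t j)) by linarith]
  linear_combination (1 - t j) ^ 2 / 4 * hε

end IsPartition

end StepFunction

noncomputable def lamellarNode (n i : ℕ) : ℝ :=
  if i = 0 then 0 else if i = n + 1 then 1 else (2 * i - 1) / (2 * n)

lemma lamellarNode_succ_sub {n i : ℕ} (hn : 1 ≤ n) (hi : i ≤ n) :
    lamellarNode n (i + 1) - lamellarNode n i =
      if i = 0 ∨ i = n then (1 / n : ℝ) / 2 else 1 / n := by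
  have : (n : ℝ) ≠ 0 := by positivity
  rcases Nat.eq_zero_or_pos i with rfl | hi0
  · simp only [lamellarNode, zero_add, one_ne_zero, if_false, if_true, true_or,
      show 1 ≠ n + 1 by omega, Nat.cast_one, sub_zero]
    field_simp; ring
  rcases hi.eq_or_lt with rfl | hin
  · simp only [lamellarNode, hi0.ne', if_false, if_true, or_true, Nat.add_one_ne_zero,
      show i ≠ i + 1 by omega]
    field_simp; ring
  · simp only [lamellarNode, hi0.ne', hin.ne, Nat.add_one_ne_zero, if_false, or_self,
      show i ≠ n + 1 by omega, show i + 1 ≠ n + 1 by omega]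
    field_simp; push_cast; ring

lemma isPartition_lamellarNode {n : ℕ} (hn : 1 ≤ n) : IsPartition n (lamellarNode n) where
  zero := by simp [lamellarNode]
  last := by simp [lamellarNode]
  lt_succ i hi := by
    rw [← sub_pos, lamellarNode_succ_sub hn hi]
    split_ifs <;> positivity

lemma tangent_le_cube {x c : ℝ} (hx : 0 ≤ x) (hc : 0 < c) :
    3 * c ^ 2 * x - 2 * c ^ 3 ≤ x ^ 3 ∧ (x ^ 3 = 3 * c ^ 2 * x - 2 * c ^ 3 ↔ x = c) := by
  have key : x ^ 3 - (3 * c ^ 2 * x - 2 * c ^ 3) = (x - c) ^ 2 * (x + 2 * c) := by ring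
  have hpos : 0 < x + 2 * c := by linarith
  refine ⟨sub_nonneg.1 (key ▸ by positivity), ?_⟩
  rw [← sub_eq_zero, key, mul_eq_zero, or_iff_left hpos.ne', sq_eq_zero_iff, sub_eq_zero]

lemma tangent_le_end_piece {ℓ m c : ℝ} (hℓ : 0 ≤ ℓ) (hc : 0 < c)
    (hm : m ^ 2 = ℓ ^ 2 / 4) :
    c ^ 2 * ℓ / 4 - c ^ 2 * (c / 2) / 6 ≤ ℓ * m ^ 2 + ℓ ^ 3 / 12 ∧
      (ℓ * m ^ 2 + ℓ ^ 3 / 12 = c ^ 2 * ℓ / 4 - c ^ 2 * (c / 2) / 6 ↔ ℓ = c / 2) := by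
  obtain ⟨hle, heq⟩ := tangent_le_cube (mul_nonneg zero_le_two hℓ) hc
  rw [hm]
  refine ⟨by linarith, ?_⟩
  rw [show ℓ = c / 2 ↔ 2 * ℓ = c by constructor <;> intro h <;> linarith, ← heq]
  constructor <;> intro h <;> linarith

lemma tangent_le_middle_piece {ℓ m c : ℝ} (hℓ : 0 ≤ ℓ) (hc : 0 < c) :
    c ^ 2 * ℓ / 4 - c ^ 2 * c / 6 ≤ ℓ * m ^ 2 + ℓ ^ 3 / 12 ∧
      (ℓ * m ^ 2 + ℓ ^ 3 / 12 = c ^ 2 * ℓ / 4 - c ^ 2 * c / 6 ↔ ℓ = c ∧ m = 0) := by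
  obtain ⟨hle, heq⟩ := tangent_le_cube hℓ hc
  have hm : 0 ≤ ℓ * m ^ 2 := by positivity
  refine ⟨by linarith, ⟨fun h => ?_, ?_⟩⟩
  · have hℓc : ℓ = c := heq.1 (by linarith)
    have : ℓ * m ^ 2 = 0 := by linarith
    exact ⟨hℓc, by simpa [hℓc, hc.ne'] using this⟩
  · rintro ⟨rfl, rfl⟩
    ring

section LamellarBound

variable {n : ℕ} {ℓ m : ℕ → ℝ}

lemma tangent_le_lamellar_piece (hn : 1 ≤ n) (hℓ : ∀ i ≤ n, 0 ≤ ℓ i)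
    (hm0 : m 0 ^ 2 = ℓ 0 ^ 2 / 4) (hmn : m n ^ 2 = ℓ n ^ 2 / 4) {i : ℕ} (hi : i ≤ n)
    {g : ℝ}     (hg : g = lamellarNode n (i + 1) - lamellarNode n i) :
    (1 / n) ^ 2 * ℓ i / 4 - (1 / n) ^ 2 * g / 6 ≤ ℓ i * m i ^ 2 + ℓ i ^ 3 / 12 ∧
      (ℓ i * m i ^ 2 + ℓ i ^ 3 / 12 = (1 / n) ^ 2 * ℓ i / 4 - (1 / n) ^ 2 * g / 6 ↔
        ℓ i = g ∧ (0 < i → i < n → m i = 0)) := by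
  have hc : (0 : ℝ) < 1 / n := by positivity
  rw [hg, lamellarNode_succ_sub hn hi]
  split_ifs with hend
  · have hm : m i ^ 2 = ℓ i ^ 2 / 4 := by rcases hend with rfl | rfl <;> assumption
    have hvac : 0 < i → i < n → m i = 0 := by omega
    rw [and_iff_left hvac]
    exact tangent_le_end_piece (hℓ i hi) hc hm
  · have hmid : 0 < i ∧ i < n := by omega
    simp only [hmid.1, hmid.2, forall_const]
    exact tangent_le_middle_piece (hℓ i hi) hc

lemma sum_tangent_lamellar (hsum : ∑ i ∈ Finset.range (n + 1), ℓ i = 1) :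
    ∑ i ∈ Finset.range (n + 1), ((1 / n) ^ 2 * ℓ i / 4 -
      (1 / n) ^ 2 * (lamellarNode n (i + 1) - lamellarNode n i) / 6) =
      1 / (12 * (n : ℝ) ^ 2) := by
  rw [Finset.sum_sub_distrib, ← Finset.sum_div, ← Finset.sum_div, ← Finset.mul_sum,
    ← Finset.mul_sum, hsum, Finset.sum_range_sub]
  simp only [lamellarNode, if_true, if_false, Nat.add_one_ne_zero]
  ring

lemma one_div_le_sum_lamellar (hn : 1 ≤ n) (hℓ : ∀ i ≤ n, 0 ≤ ℓ i)
    (hsum : ∑ i ∈ Finset.range (n + 1), ℓ i = 1)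
    (hm0 : m 0 ^ 2 = ℓ 0 ^ 2 / 4) (hmn : m n ^ 2 = ℓ n ^ 2 / 4) :
    1 / (12 * (n : ℝ) ^ 2) ≤
      ∑ i ∈ Finset.range (n + 1), (ℓ i * m i ^ 2 + ℓ i ^ 3 / 12) := by
  rw [← sum_tangent_lamellar hsum]
  exact Finset.sum_le_sum fun i hi =>
    (tangent_le_lamellar_piece hn hℓ hm0 hmn (Finset.mem_range_succ_iff.1 hi) rfl).1

lemma sum_lamellar_eq_iff (hn : 1 ≤ n) (hℓ : ∀ i ≤ n, 0 ≤ ℓ i)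
    (hsum : ∑ i ∈ Finset.range (n + 1), ℓ i = 1)
    (hm0 : m 0 ^ 2 = ℓ 0 ^ 2 / 4) (hmn : m n ^ 2 = ℓ n ^ 2 / 4) :
    ∑ i ∈ Finset.range (n + 1), (ℓ i * m i ^ 2 + ℓ i ^ 3 / 12) =
        1 / (12 * (n : ℝ) ^ 2) ↔
      ∀ i ≤ n, ℓ i = lamellarNode n (i + 1) - lamellarNode n i ∧
        (0 < i → i < n → m i = 0) := by
  rw [← sum_tangent_lamellar hsum, eq_comm, Finset.sum_eq_sum_iff_of_le fun i hi =>
    (tangent_le_lamellar_piece hn hℓ hm0 hmn (Finset.mem_range_succ_iff.1 hi) rfl).1]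
  refine forall_congr' fun i => ?_
  rw [Finset.mem_range_succ_iff]
  exact imp_congr_right fun hi => by
    rw [eq_comm]
    exact (tangent_le_lamellar_piece hn hℓ hm0 hmn hi rfl).2

end LamellarBound

namespace IsPartition

variable {u : ℝ → ℝ} {j : ℕ} {t ε : ℕ → ℝ}

lemma one_div_le_integral_sq (ht : IsPartition j t)
    (hu : ∀ i ≤ j, ∀ᵐ s ∂volume.restrict (Ioo (t i) (t (i + 1))), u s = ε i)
    (hε : ∀ i ≤ j, ε i ^ 2 = 1) (hmean : ∫ s in 0..1, u s = 0) (hj : 1 ≤ j) :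
    1 / (12 * (j : ℝ) ^ 2) ≤ ∫ y in 0..1, (∫ s in 0..y, u s) ^ 2 := by
  rw [ht.integral_sq_primitive_of_sq_eq_one hu hε]
  exact one_div_le_sum_lamellar hj (fun i hi => sub_nonneg.2 (ht.lt_succ i hi).le) ht.sum_sub
    (ht.sq_first_midpoint (hε 0 j.zero_le)) (ht.sq_last_midpoint hu (hε j le_rfl) hmean)

lemma eq_lamellarNode_of_integral_sq_eq (ht : IsPartition j t)
    (hu : ∀ i ≤ j, ∀ᵐ s ∂volume.restrict (Ioo (t i) (t (i + 1))), u s = ε i)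
    (hε : ∀ i ≤ j, ε i ^ 2 = 1) (hmean : ∫ s in 0..1, u s = 0) (hj : 1 ≤ j)
    (h : ∫ y in 0..1, (∫ s in 0..y, u s) ^ 2 = 1 / (12 * (j : ℝ) ^ 2)) {i : ℕ}
    (hi : i ≤ j + 1) : t i = lamellarNode j i := by
  rw [ht.integral_sq_primitive_of_sq_eq_one hu hε, sum_lamellar_eq_iff hj
    (fun i hi => sub_nonneg.2 (ht.lt_succ i hi).le) ht.sum_sub
    (ht.sq_first_midpoint (hε 0 j.zero_le)) (ht.sq_last_midpoint hu (hε j le_rfl) hmean)] at h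
  induction i with
  | zero => simp [ht.zero, lamellarNode]
  | succ i ih => linarith [ih (by omega), (h i (by omega)).1]

end IsPartition

lemma sq_mul_neg_one_pow {σ : ℝ} (hσ : σ = 1 ∨ σ = -1) (i : ℕ) :
    (σ * (-1) ^ i) ^ 2 = 1 := by
  rw [mul_pow, ← pow_mul, pow_mul', neg_one_sq, one_pow, mul_one]
  rcases hσ with rfl | rfl <;> norm_num

section Lamellar

variable {u : ℝ → ℝ} {n : ℕ} {σ : ℝ}

lemma primitive_lamellarNode (hn : 1 ≤ n)
    (hu : ∀ i ≤ n, ∀ᵐ s ∂volume.restrict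
      (Ioo (lamellarNode n i) (lamellarNode n (i + 1))), u s = σ * (-1) ^ i)
    {i : ℕ} (hi1 : 1 ≤ i) (hin : i ≤ n) :
    ∫ s in 0..lamellarNode n i, u s = -(σ * (-1) ^ i) / (2 * n) := by
  have ht := isPartition_lamellarNode hn
  have hn0 : (n : ℝ) ≠ 0 := by positivity
  induction i, hi1 using Nat.le_induction with
  | base =>
    rw [ht.primitive_eq hu n.zero_le (right_mem_Icc.2 (ht.lt_succ 0 n.zero_le).le),
      lamellarNode_succ_sub hn n.zero_le, if_pos (Or.inl rfl), ht.zero, integral_same]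
    field_simp
    ring
  | succ i hi ih =>
    rw [ht.primitive_eq hu (by omega) (right_mem_Icc.2 (ht.lt_succ i (by omega)).le),
      lamellarNode_succ_sub hn (by omega), if_neg (by omega), ih (by omega)]
    field_simp
    ring

lemma integral_sq_primitive_lamellar (hn : 1 ≤ n) (hσ : σ = 1 ∨ σ = -1)
    (hu : ∀ i ≤ n, ∀ᵐ s ∂volume.restrict
      (Ioo (lamellarNode n i) (lamellarNode n (i + 1))), u s = σ * (-1) ^ i) :
    ∫ y in 0..1, (∫ s in 0..y, u s) ^ 2 = 1 / (12 * (n : ℝ) ^ 2) := by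
  have ht := isPartition_lamellarNode hn
  have hn0 : (n : ℝ) ≠ 0 := by positivity
  have hε : ∀ i ≤ n, (σ * (-1) ^ i) ^ 2 = 1 := fun i _ => sq_mul_neg_one_pow hσ i
  have hlast : ((∫ s in 0..lamellarNode n n, u s) + σ * (-1) ^ n *
      (lamellarNode n (n + 1) - lamellarNode n n) / 2) ^ 2 =
      (lamellarNode n (n + 1) - lamellarNode n n) ^ 2 / 4 := by
    rw [primitive_lamellarNode hn hu hn le_rfl, lamellarNode_succ_sub hn le_rfl,
      if_pos (Or.inr rfl)]
    linear_combination 1 / (16 * (n : ℝ) ^ 2) * hε n le_rfl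
  rw [ht.integral_sq_primitive_of_sq_eq_one hu hε, sum_lamellar_eq_iff hn
    (fun i hi => sub_nonneg.2 (ht.lt_succ i hi).le) ht.sum_sub
    (ht.sq_first_midpoint (u := u) (ε := fun i => σ * (-1) ^ i) (hε 0 n.zero_le)) hlast]
  refine fun i hi => ⟨rfl, fun hi0 hin => ?_⟩
  rw [primitive_lamellarNode hn hu hi0 hi, lamellarNode_succ_sub hn hi, if_neg (by omega)]
  field_simp
  ring

end Lamellar

lemma uk_eq_neg_one_pow {k i : ℕ} (hk : 1 ≤ k) (hi : i ≤ k) {s : ℝ}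
    (hs : s ∈ Ioo (lamellarNode k i) (lamellarNode k (i + 1))) : uk k s = (-1) ^ i := by
  have hk0 : (0 : ℝ) < k := by positivity
  have hlo : (2 * i - 1) / (2 * k) ≤ lamellarNode k i := by
    rcases Nat.eq_zero_or_pos i with rfl | hi0
    · simp only [lamellarNode, if_pos]
      exact div_nonpos_of_nonpos_of_nonneg (by norm_num) (by positivity)
    · rw [lamellarNode, if_neg hi0.ne', if_neg (by omega)]
  have hhi : lamellarNode k (i + 1) ≤ (2 * i + 1) / (2 * k) := by
    rcases hi.eq_or_lt with rfl | hik
    · rw [lamellarNode, if_neg (by omega), if_pos rfl, le_div_iff₀ (by positivity)]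
      linarith
    · rw [lamellarNode, if_neg (by omega), if_neg (by omega)]
      push_cast
      ring_nf
      exact le_rfl
  have hfloor : ⌊(k : ℝ) * s + 1 / 2⌋ = i := by
    have h1 := hlo.trans_lt hs.1
    have h2 := hs.2.trans_le hhi
    rw [div_lt_iff₀ (by positivity)] at h1
    rw [lt_div_iff₀ (by positivity)] at h2
    rw [Int.floor_eq_iff]
    push_cast
    constructor <;> linarith
  rw [uk, hfloor, zpow_natCast]

lemma ae_eq_or_ae_eq_neg_iff {α : Type*} [MeasurableSpace α] {μ : Measure α}
    {f g : α → ℝ} :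
    ((∀ᵐ s ∂μ, f s = g s) ∨ ∀ᵐ s ∂μ, f s = -g s) ↔
      ∃ σ : ℝ, (σ = 1 ∨ σ = -1) ∧ ∀ᵐ s ∂μ, f s = σ * g s := by
  constructor
  · rintro (h | h)
    · exact ⟨1, Or.inl rfl, by simpa using h⟩
    · exact ⟨-1, Or.inr rfl, by simpa using h⟩
  · rintro ⟨σ, rfl | rfl, h⟩
    · exact Or.inl (by simpa using h)
    · exact Or.inr (by simpa using h)

section Uk

variable {u : ℝ → ℝ} {j k : ℕ} {t : ℕ → ℝ} {σ : ℝ}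

lemma IsPartition.ae_eq_mul_uk (ht : IsPartition j t) (hj : 1 ≤ j)
    (hu : ∀ i ≤ j, ∀ s ∈ Ioo (t i) (t (i + 1)), u s = σ * (-1) ^ i)
    (hnode : ∀ i ≤ j + 1, t i = lamellarNode j i) :
    ∀ᵐ s ∂volume.restrict (Ioo 0 1), u s = σ * uk j s :=
  ht.ae_restrict_of_forall_Ioo fun i hi s hs => by
    rw [hu i hi s hs, uk_eq_neg_one_pow hj hi
      (by rwa [← hnode i (by omega), ← hnode (i + 1) (by omega)])]

lemma ae_restrict_lamellarNode_of_ae_eq_mul_uk (hk : 1 ≤ k)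
    (h : ∀ᵐ s ∂volume.restrict (Ioo 0 1), u s = σ * uk k s) {i : ℕ} (hi : i ≤ k) :
    ∀ᵐ s ∂volume.restrict (Ioo (lamellarNode k i) (lamellarNode k (i + 1))),
      u s = σ * (-1) ^ i := by
  filter_upwards [ae_restrict_of_ae_restrict_of_subset
    ((isPartition_lamellarNode hk).Ioo_subset hi) h, ae_restrict_mem measurableSet_Ioo]
    with s hs hmem
  rw [hs, uk_eq_neg_one_pow hk hi hmem]

end Uk

namespace IsPartition

variable {u : ℝ → ℝ} {j : ℕ} {t : ℕ → ℝ}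

lemma exists_eq_mul_neg_one_pow (ht : IsPartition j t)
    (huval : ∀ s ∈ Ioo (0 : ℝ) 1, u s = 1 ∨ u s = -1)
    (hconst : ∀ i ≤ j, ∀ x ∈ Ioo (t i) (t (i + 1)),
      ∀ y ∈ Ioo (t i) (t (i + 1)), u x = u y)
    (hjump : ∀ i, i + 1 ≤ j → ∀ x ∈ Ioo (t i) (t (i + 1)),
      ∀ y ∈ Ioo (t (i + 1)) (t (i + 2)), u x ≠ u y) :
    ∃ σ : ℝ, (σ = 1 ∨ σ = -1) ∧
      ∀ i ≤ j, ∀ s ∈ Ioo (t i) (t (i + 1)), u s = σ * (-1) ^ i := by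
  have hmid : ∀ i ≤ j, (t i + t (i + 1)) / 2 ∈ Ioo (t i) (t (i + 1)) := fun i hi => by
    constructor <;> linarith [ht.lt_succ i hi]
  have hsq : ∀ i ≤ j, ∀ s ∈ Ioo (t i) (t (i + 1)), u s ^ 2 = 1 := fun i hi s hs => by
    rcases huval s (ht.Ioo_subset hi hs) with h | h <;> simp [h]
  set σ := u ((t 0 + t 1) / 2)
  have hσ : σ = 1 ∨ σ = -1 := huval _ (ht.Ioo_subset j.zero_le (hmid 0 j.zero_le))
  refine ⟨σ, hσ, fun i hi => ?_⟩
  induction i with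
  | zero => exact fun s hs => by simpa using hconst 0 hi s hs _ (hmid 0 hi)
  | succ i ih =>
    intro s hs
    have hx := hmid i (by omega)
    have hne : u s ≠ σ * (-1) ^ i := by
      rw [← ih (by omega) _ hx]
      exact (hjump i hi _ hx s hs).symm
    rw [((sq_eq_sq_iff_eq_or_eq_neg.1 ((hsq _ hi s hs).trans
      (sq_mul_neg_one_pow hσ i).symm))).resolve_left hne, pow_succ]
    ring

lemma one_le_of_integral_eq_zero (ht : IsPartition j t) {σ : ℝ} (hσ : σ ≠ 0)
    (hu : ∀ i ≤ j, ∀ᵐ s ∂volume.restrict (Ioo (t i) (t (i + 1))), u s = σ * (-1) ^ i)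
    (hmean : ∫ s in 0..1, u s = 0) : 1 ≤ j := by
  by_contra! hj
  obtain rfl : j = 0 := by omega
  have h := integral_of_ae_eq_const (ht.lt_succ 0 le_rfl).le (hu 0 le_rfl)
  rw [ht.zero, ht.last, hmean, pow_zero, mul_one, sub_zero, mul_one] at h
  exact hσ h.symm

lemma exists_node_eq_of_ae_eq {v : ℝ → ℝ} {k : ℕ} {y : ℕ → ℝ}
    (ht : IsPartition j t) (hy : IsPartition k y)
    (hjump : ∀ i, i + 1 ≤ j → ∀ x ∈ Ioo (t i) (t (i + 1)),
      ∀ x' ∈ Ioo (t (i + 1)) (t (i + 2)), u x ≠ u x')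
    (hv : ∀ m ≤ k, ∀ x ∈ Ioo (y m) (y (m + 1)),
      ∀ x' ∈ Ioo (y m) (y (m + 1)), v x = v x')
    (huv : ∀ᵐ s ∂volume.restrict (Ioo 0 1), u s = v s) {i : ℕ} (hi : i + 1 ≤ j) :
    ∃ m < k, y (m + 1) = t (i + 1) := by
  have hti := ht.mem_Ioo i.succ_pos hi
  obtain ⟨m, hm, hym, hym'⟩ := hy.exists_mem_Ico (Ioo_subset_Ico_self hti)
  rcases hym.eq_or_lt with h | hlt
  · obtain ⟨m, rfl⟩ : ∃ m', m = m' + 1 := Nat.exists_eq_succ_of_ne_zero fun h0 => by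
      subst h0
      linarith [hy.zero, hti.1]
    exact ⟨m, by omega, h⟩
  -- Otherwise `v` is constant on a neighbourhood of `t (i + 1)`, across which `u` jumps.
  have hex : ∀ {a b}, a < b → Ioo a b ⊆ Ioo 0 1 → ∃ x ∈ Ioo a b, u x = v x :=
    fun hab hsub =>
      exists_mem_Ioo_of_ae_restrict hab (ae_restrict_of_ae_restrict_of_subset hsub huv)
  obtain ⟨x, hx, hux⟩ := hex (max_lt hlt (ht.lt_succ i (by omega)))
    ((Ioo_subset_Ioo_left (le_max_right _ _)).trans (ht.Ioo_subset (by omega)))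
  obtain ⟨x', hx', hux'⟩ := hex (lt_min hym' (ht.lt_succ (i + 1) hi))
    ((Ioo_subset_Ioo_right (min_le_right _ _)).trans (ht.Ioo_subset hi))
  refine absurd ?_ (hjump i hi x ⟨(le_max_right _ _).trans_lt hx.1, hx.2⟩ x'
    ⟨hx'.1, hx'.2.trans_le (min_le_right _ _)⟩)
  rw [hux, hux']
  exact hv m hm x ⟨(le_max_left _ _).trans_lt hx.1, hx.2.trans hym'⟩ x'
    ⟨hlt.trans hx'.1, hx'.2.trans_le (min_le_left _ _)⟩

lemma le_of_forall_exists_node_eq (ht : IsPartition j t) {k : ℕ} {y : ℕ → ℝ}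
    (h : ∀ i < j, ∃ m < k, y (m + 1) = t (i + 1)) : j ≤ k := by
  have hinj : InjOn (fun i => t (i + 1)) (Finset.range j) := fun a ha b hb hab => by
    simp only [Finset.coe_range, mem_Iio] at ha hb
    simpa using ht.strictMonoOn.injOn (by simp only [mem_Iic]; omega)
      (by simp only [mem_Iic]; omega) hab
  calc j = ((Finset.range j).image fun i => t (i + 1)).card := by
        rw [Finset.card_image_of_injOn hinj, Finset.card_range]
    _ ≤ ((Finset.range k).image fun m => y (m + 1)).card := Finset.card_le_card fun x hx => by
        obtain ⟨i, hi, rfl⟩ := Finset.mem_image.1 hx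
        obtain ⟨m, hm, hym⟩ := h i (Finset.mem_range.1 hi)
        exact Finset.mem_image.2 ⟨m, Finset.mem_range.2 hm, hym⟩
    _ ≤ k := Finset.card_image_le.trans (Finset.card_range k).le

lemma le_of_ae_eq_mul_uk {k : ℕ} {σ : ℝ} (ht : IsPartition j t) (hk : 1 ≤ k)
    (hjump : ∀ i, i + 1 ≤ j → ∀ x ∈ Ioo (t i) (t (i + 1)),
      ∀ x' ∈ Ioo (t (i + 1)) (t (i + 2)), u x ≠ u x')
    (h : ∀ᵐ s ∂volume.restrict (Ioo 0 1), u s = σ * uk k s) : j ≤ k :=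
  ht.le_of_forall_exists_node_eq fun _ hi =>
    ht.exists_node_eq_of_ae_eq (isPartition_lamellarNode hk) hjump
      (fun m hm x hx x' hx' => by rw [uk_eq_neg_one_pow hk hm hx, uk_eq_neg_one_pow hk hm hx'])
      h hi

end IsPartition

section LamellarEnergy

variable {k n : ℕ} {γ : ℝ}

lemma lamellar_energy_lt (hk : 1 ≤ k)
    (hγ1 : 12 * (k : ℝ) ^ 2 * ((k : ℝ) - 1) ^ 2 / (2 * (k : ℝ) - 1) < γ)
    (hγ2 : γ < 12 * (k : ℝ) ^ 2 * ((k : ℝ) + 1) ^ 2 / (2 * (k : ℝ) + 1))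
    (hn : 1 ≤ n) (hne : n ≠ k) :
    (k : ℝ) + γ / (12 * (k : ℝ) ^ 2) < n + γ / (12 * (n : ℝ) ^ 2) := by
  have hk1 : (1 : ℝ) ≤ k := by exact_mod_cast hk
  have hn1 : (1 : ℝ) ≤ n := by exact_mod_cast hn
  rw [div_lt_iff₀ (by linarith)] at hγ1
  rw [lt_div_iff₀ (by linarith)] at hγ2
  have hdiff : (n : ℝ) + γ / (12 * n ^ 2) - (k + γ / (12 * k ^ 2)) =
      (n - k) * (12 * k ^ 2 * n ^ 2 - γ * (n + k)) / (12 * k ^ 2 * n ^ 2) := by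
    field_simp
    ring
  suffices h : 0 < ((n : ℝ) - k) * (12 * k ^ 2 * n ^ 2 - γ * (n + k)) by
    have := div_pos h (by positivity : (0 : ℝ) < 12 * k ^ 2 * n ^ 2)
    linarith
  -- `x ↦ x² / (x + k)` is increasing, so it suffices to compare at `n = k ± 1`.
  rcases Nat.lt_or_gt_of_ne hne with hlt | hlt
  · have hnk : (n : ℝ) + 1 ≤ k := by exact_mod_cast hlt
    have hpoly : (n : ℝ) ^ 2 * (2 * k - 1) ≤ (k - 1) ^ 2 * (n + k) := by
      nlinarith [mul_nonneg (sub_nonneg.2 hnk) (by linarith : (0 : ℝ) ≤ n)]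
    refine mul_pos_of_neg_of_neg (by linarith) ?_
    nlinarith [mul_le_mul_of_nonneg_left hpoly (by positivity : (0 : ℝ) ≤ 12 * k ^ 2)]
  · have hkn : (k : ℝ) + 1 ≤ n := by exact_mod_cast hlt
    have hpoly : ((k : ℝ) + 1) ^ 2 * (n + k) ≤ n ^ 2 * (2 * k + 1) := by
      nlinarith [mul_nonneg (sub_nonneg.2 hkn) (by linarith : (0 : ℝ) ≤ k)]
    refine mul_pos (by linarith) ?_
    nlinarith [mul_le_mul_of_nonneg_left hpoly (by positivity : (0 : ℝ) ≤ 12 * k ^ 2)]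

lemma lamellar_energy_le (hk : 1 ≤ k)
    (hγ1 : 12 * (k : ℝ) ^ 2 * ((k : ℝ) - 1) ^ 2 / (2 * (k : ℝ) - 1) < γ)
    (hγ2 : γ < 12 * (k : ℝ) ^ 2 * ((k : ℝ) + 1) ^ 2 / (2 * (k : ℝ) + 1)) (hn : 1 ≤ n) :
    (k : ℝ) + γ / (12 * (k : ℝ) ^ 2) ≤ n + γ / (12 * (n : ℝ) ^ 2) := by
  rcases eq_or_ne n k with rfl | hne
  · exact le_rfl
  · exact (lamellar_energy_lt hk hγ1 hγ2 hn hne).le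

end LamellarEnergy

/-- For `γ` in the window `(12k²(k−1)²/(2k−1), 12k²(k+1)²/(2k+1))`, any mean-zero
piecewise constant `±1`-valued `u` on `(0,1)` with exactly `j` jumps satisfies
`j + γ∫₀¹ w² ≥ k + γ/(12k²)` with `w(y) = ∫₀^y u`, with equality iff `u = ±u_k` a.e. -/
theorem stmt0 (k : ℕ) (hk : 1 ≤ k) (γ : ℝ)
    (hγ1 : 12 * (k : ℝ) ^ 2 * ((k : ℝ) - 1) ^ 2 / (2 * (k : ℝ) - 1) < γ)
    (hγ2 : γ < 12 * (k : ℝ) ^ 2 * ((k : ℝ) + 1) ^ 2 / (2 * (k : ℝ) + 1))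
    (u : ℝ → ℝ)
    (huval : ∀ s ∈ Set.Ioo (0 : ℝ) 1, u s = 1 ∨ u s = -1)
    (j : ℕ) (t : ℕ → ℝ)
    (ht0 : t 0 = 0) (htlast : t (j + 1) = 1)
    (htmono : ∀ i, i ≤ j → t i < t (i + 1))
    (hconst : ∀ i, i ≤ j → ∀ x ∈ Set.Ioo (t i) (t (i + 1)),
      ∀ y ∈ Set.Ioo (t i) (t (i + 1)), u x = u y)
    (hjump : ∀ i, i + 1 ≤ j → ∀ x ∈ Set.Ioo (t i) (t (i + 1)),
      ∀ y ∈ Set.Ioo (t (i + 1)) (t (i + 2)), u x ≠ u y)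
    (hmean : ∫ s in (0 : ℝ)..1, u s = 0)
    (w : ℝ → ℝ) (hw : ∀ y, w y = ∫ s in (0 : ℝ)..y, u s) :
    (j : ℝ) + γ * ∫ y in (0 : ℝ)..1, (w y) ^ 2 ≥ (k : ℝ) + γ / (12 * (k : ℝ) ^ 2) ∧
    ((j : ℝ) + γ * ∫ y in (0 : ℝ)..1, (w y) ^ 2 = (k : ℝ) + γ / (12 * (k : ℝ) ^ 2) ↔
      (∀ᵐ s ∂(volume.restrict (Set.Ioo (0 : ℝ) 1)), u s = uk k s) ∨
      (∀ᵐ s ∂(volume.restrict (Set.Ioo (0 : ℝ) 1)), u s = - uk k s)) := by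
  have ht : IsPartition j t := ⟨ht0, htlast, htmono⟩
  obtain ⟨σ, hσ, hu⟩ := ht.exists_eq_mul_neg_one_pow huval hconst hjump
  have hu' : ∀ i ≤ j, ∀ᵐ s ∂volume.restrict (Ioo (t i) (t (i + 1))),
      u s = σ * (-1) ^ i :=
    fun i hi => ae_restrict_of_forall_mem measurableSet_Ioo (hu i hi)
  have hε : ∀ i ≤ j, (σ * (-1) ^ i) ^ 2 = 1 := fun i _ => sq_mul_neg_one_pow hσ i
  have hj := ht.one_le_of_integral_eq_zero (by rcases hσ with rfl | rfl <;> norm_num) hu' hmean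
  have hγ : 0 < γ := (div_nonneg (by positivity)
    (by linarith [(Nat.one_le_cast (α := ℝ)).2 hk])).trans_lt hγ1
  have hS := ht.one_div_le_integral_sq hu' hε hmean hj
  have hγS := mul_le_mul_of_nonneg_left hS hγ.le
  simp only [hw]
  rw [← div_eq_mul_one_div] at hγS
  refine ⟨by linarith [lamellar_energy_le hk hγ1 hγ2 hj], ?_⟩
  rw [ae_eq_or_ae_eq_neg_iff]
  refine ⟨fun heq => ⟨σ, hσ, ?_⟩, fun ⟨σ', hσ', h⟩ => ?_⟩
  · obtain rfl : j = k := by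
      by_contra hne
      linarith [lamellar_energy_lt hk hγ1 hγ2 hj hne]
    have hSj : ∫ y in 0..1, (∫ s in 0..y, u s) ^ 2 = 1 / (12 * (j : ℝ) ^ 2) := by
      rw [← mul_right_inj' hγ.ne', ← div_eq_mul_one_div]
      linarith
    exact ht.ae_eq_mul_uk hj hu fun i hi =>
      ht.eq_lamellarNode_of_integral_sq_eq hu' hε hmean hj hSj hi
  · have hSk := integral_sq_primitive_lamellar hk hσ' fun i hi =>
      ae_restrict_lamellarNode_of_ae_eq_mul_uk hk h hi
    have hkj : k ≤ j := by
      by_contra! hlt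
      rw [hSk] at hS
      exact hS.not_gt (one_div_lt_one_div_of_lt (by positivity) (by gcongr))
    rw [hSk, le_antisymm (ht.le_of_ae_eq_mul_uk hk hjump h) hkj, ← div_eq_mul_one_div]
end

section
/- Let k be a positive integer and let w_k(y) = ∫₀^y u_k(t) dt. Then ∫₀¹ w_k(y)² dy = 1/(12k²). Consequently the one-dimensional nonlocal energy of the k-jump configuration is E₀^γ(u_k) = k + γ/(12k²) for every γ ≥ 0. -/
/-!
`u_k` is antiperiodic with antiperiod `1/k` and has zero mean over `[0, 1/k]`, so its primitive
`w_k` is again `1/k`-antiperiodic and `w_k²` is `1/k`-periodic. On one period `w_k` is the tent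
`min (y, 1/k - y)`, whose square integrates to `2 · (1/(2k))³/3 = 1/(12k³)`; the `k` periods
in `[0, 1]` give `1/(12k²)`.
-/

open MeasureTheory intervalIntegral

/-- `w_k(y) = ∫₀^y u_k(t) dt`. -/
noncomputable def wk (k : ℕ) (y : ℝ) : ℝ := ∫ t in (0 : ℝ)..y, uk k t

open Set Function

theorem Function.Antiperiodic.antiperiodic_primitive {f : ℝ → ℝ} {T : ℝ}
    (hf : Antiperiodic f T) (hfi : ∀ a b, IntervalIntegrable f volume a b)
    (hT : ∫ t in (0 : ℝ)..T, f t = 0) : Antiperiodic (fun y ↦ ∫ t in (0 : ℝ)..y, f t) T := by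
  intro y
  have hshift : ∫ t in T..y + T, f t = ∫ t in (0 : ℝ)..y, f (t + T) := by
    rw [integral_comp_add_right, zero_add]
  show ∫ t in (0 : ℝ)..y + T, f t = -∫ t in (0 : ℝ)..y, f t
  rw [← integral_add_adjacent_intervals (hfi 0 T) (hfi T (y + T)), hT, zero_add, hshift]
  simp only [hf _, intervalIntegral.integral_neg]

theorem Function.Periodic.intervalIntegral_zero_one {f : ℝ → ℝ} {k : ℕ}
    (hf : Periodic f (k : ℝ)⁻¹) (hk : 0 < k) (hfi : ∀ a b, IntervalIntegrable f volume a b) :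
    ∫ t in (0 : ℝ)..1, f t = k * ∫ t in (0 : ℝ)..(k : ℝ)⁻¹, f t := by
  have h := hf.intervalIntegral_add_zsmul_eq k 0 hfi
  rw [zero_add, zero_add, zsmul_eq_mul, zsmul_eq_mul, Int.cast_natCast,
    mul_inv_cancel₀ (by positivity)] at h
  exact h

theorem measurable_uk (k : ℕ) : Measurable (uk k) :=
  (measurable_from_top (f := fun n : ℤ ↦ (-1 : ℝ) ^ n)).comp
    (Int.measurable_floor.comp (by fun_prop))

theorem abs_uk (k : ℕ) (t : ℝ) : |uk k t| = 1 := by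
  simp [uk, abs_zpow]

theorem intervalIntegrable_uk (k : ℕ) (a b : ℝ) : IntervalIntegrable (uk k) volume a b := by
  refine IntervalIntegrable.mono_fun' (g := fun _ ↦ (1 : ℝ)) intervalIntegrable_const
    (measurable_uk k).aestronglyMeasurable (Filter.Eventually.of_forall fun t ↦ (abs_uk k t).le)

theorem uk_antiperiodic {k : ℕ} (hk : 0 < k) : Antiperiodic (uk k) (k : ℝ)⁻¹ := by
  intro t
  have h : (k : ℝ) * (t + (k : ℝ)⁻¹) + 1 / 2 = (k * t + 1 / 2) + 1 := by field_simp; ring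
  rw [uk, uk, h, Int.floor_add_one, zpow_add_one₀ (by norm_num), mul_neg_one]

theorem uk_eq_one {k : ℕ} (hk : 0 < k) {t : ℝ} (ht : t ∈ Ico 0 (2 * (k : ℝ))⁻¹) :
    uk k t = 1 := by
  have hK : (0 : ℝ) < k := by exact_mod_cast hk
  have hkt : (k : ℝ) * t < 1 / 2 :=
    calc (k : ℝ) * t < k * (2 * (k : ℝ))⁻¹ := mul_lt_mul_of_pos_left ht.2 hK
      _ = 1 / 2 := by field_simp
  have : ⌊(k : ℝ) * t + 1 / 2⌋ = 0 := by
    rw [Int.floor_eq_zero_iff]; constructor <;> nlinarith [ht.1]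
  rw [uk, this, zpow_zero]

theorem uk_eq_neg_one {k : ℕ} (hk : 0 < k) {t : ℝ} (ht : t ∈ Icc (2 * (k : ℝ))⁻¹ (k : ℝ)⁻¹) :
    uk k t = -1 := by
  have hK : (0 : ℝ) < k := by exact_mod_cast hk
  have hl : 1 / 2 ≤ (k : ℝ) * t :=
    calc 1 / 2 = (k : ℝ) * (2 * (k : ℝ))⁻¹ := by field_simp
      _ ≤ k * t := mul_le_mul_of_nonneg_left ht.1 hK.le
  have hu : (k : ℝ) * t ≤ 1 :=
    calc (k : ℝ) * t ≤ k * (k : ℝ)⁻¹ := mul_le_mul_of_nonneg_left ht.2 hK.le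
      _ = 1 := by field_simp
  have : ⌊(k : ℝ) * t + 1 / 2⌋ = 1 := by
    rw [Int.floor_eq_iff]; constructor <;> push_cast <;> linarith
  rw [uk, this, zpow_one]

theorem continuous_wk (k : ℕ) : Continuous (wk k) :=
  continuous_primitive (intervalIntegrable_uk k) 0

theorem intervalIntegrable_wk_sq (k : ℕ) (a b : ℝ) :
    IntervalIntegrable (fun y ↦ wk k y ^ 2) volume a b :=
  ((continuous_wk k).pow 2).intervalIntegrable a b

theorem wk_eq_self {k : ℕ} (hk : 0 < k) {y : ℝ} (hy : y ∈ Icc 0 (2 * (k : ℝ))⁻¹) :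
    wk k y = y := by
  -- `u_k` is already `-1` at the right end point `(2k)⁻¹`, hence the open interval.
  have h : EqOn (uk k) (fun _ ↦ 1) (Ioo 0 y) :=
    fun t ht ↦ uk_eq_one hk ⟨ht.1.le, ht.2.trans_le hy.2⟩
  rw [wk, integral_congr_Ioo_of_le hy.1 h, intervalIntegral.integral_const, smul_eq_mul,
    mul_one, sub_zero]

theorem wk_eq_inv_sub {k : ℕ} (hk : 0 < k) {y : ℝ} (hy : y ∈ Icc (2 * (k : ℝ))⁻¹ (k : ℝ)⁻¹) :
    wk k y = (k : ℝ)⁻¹ - y := by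
  have hhalf : (2 * (k : ℝ))⁻¹ ∈ Icc 0 (2 * (k : ℝ))⁻¹ := ⟨by positivity, le_rfl⟩
  have h : EqOn (uk k) (fun _ ↦ -1) (uIcc (2 * (k : ℝ))⁻¹ y) := fun t ht ↦ by
    rw [uIcc_of_le hy.1] at ht
    exact uk_eq_neg_one hk ⟨ht.1, ht.2.trans hy.2⟩
  rw [wk, ← integral_add_adjacent_intervals (intervalIntegrable_uk k _ _)
    (intervalIntegrable_uk k _ _), ← wk, wk_eq_self hk hhalf, integral_congr h,
    intervalIntegral.integral_const, smul_eq_mul]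
  field_simp
  ring

theorem wk_antiperiodic {k : ℕ} (hk : 0 < k) : Antiperiodic (wk k) (k : ℝ)⁻¹ := by
  have hK : (0 : ℝ) < k := by exact_mod_cast hk
  have hper : wk k (k : ℝ)⁻¹ = 0 := by
    rw [wk_eq_inv_sub hk ⟨inv_anti₀ hK (by linarith), le_rfl⟩, sub_self]
  exact (uk_antiperiodic hk).antiperiodic_primitive (intervalIntegrable_uk k) hper

theorem integral_wk_sq_period {k : ℕ} (hk : 0 < k) :
    ∫ y in (0 : ℝ)..(k : ℝ)⁻¹, wk k y ^ 2 = (12 * (k : ℝ) ^ 3)⁻¹ := by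
  have hK : (0 : ℝ) < k := by exact_mod_cast hk
  have hhalf : (2 * (k : ℝ))⁻¹ ≤ (k : ℝ)⁻¹ := inv_anti₀ hK (by linarith)
  have hrise : ∫ y in (0 : ℝ)..(2 * (k : ℝ))⁻¹, wk k y ^ 2
      = ∫ y in (0 : ℝ)..(2 * (k : ℝ))⁻¹, y ^ 2 :=
    integral_congr fun y hy ↦ by
      rw [uIcc_of_le (by positivity)] at hy
      simp only [wk_eq_self hk hy]
  have hfall : ∫ y in (2 * (k : ℝ))⁻¹..(k : ℝ)⁻¹, wk k y ^ 2
      = ∫ y in (2 * (k : ℝ))⁻¹..(k : ℝ)⁻¹, ((k : ℝ)⁻¹ - y) ^ 2 :=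
    integral_congr fun y hy ↦ by
      rw [uIcc_of_le hhalf] at hy
      simp only [wk_eq_inv_sub hk hy]
  rw [← integral_add_adjacent_intervals (intervalIntegrable_wk_sq k _ _)
    (intervalIntegrable_wk_sq k _ _), hrise, hfall,
    intervalIntegral.integral_comp_sub_left (fun y ↦ y ^ 2), integral_pow, integral_pow]
  norm_num
  field_simp
  ring

theorem integral_wk_sq {k : ℕ} (hk : 0 < k) :
    ∫ y in (0 : ℝ)..1, wk k y ^ 2 = 1 / (12 * (k : ℝ) ^ 2) := by
  have hper : Periodic (fun y ↦ wk k y ^ 2) (k : ℝ)⁻¹ :=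
    fun y ↦ by simp only [wk_antiperiodic hk y, neg_sq]
  rw [hper.intervalIntegral_zero_one hk (intervalIntegrable_wk_sq k),
    integral_wk_sq_period hk]
  field_simp

/-- `∫₀¹ w_k² = 1/(12k²)`, hence `E₀^γ(u_k) = k + γ/(12k²)` for all `γ ≥ 0`. -/
theorem stmt1 (k : ℕ) (hk : 1 ≤ k) :
    (∫ y in (0 : ℝ)..1, (wk k y) ^ 2) = 1 / (12 * (k : ℝ) ^ 2) ∧
    ∀ γ : ℝ, 0 ≤ γ →
      (k : ℝ) + γ * ∫ y in (0 : ℝ)..1, (wk k y) ^ 2 = (k : ℝ) + γ / (12 * (k : ℝ) ^ 2) := by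
  refine ⟨integral_wk_sq hk, fun γ _ ↦ ?_⟩
  rw [integral_wk_sq hk, mul_one_div]
end

section
/- Let k be a positive integer and let γ be a real number with 12k²(k−1)²/(2k−1) < γ < 12k²(k+1)²/(2k+1). Then for every positive integer j with j ≠ k one has k + γ/(12k²) < j + γ/(12j²); that is, k is the unique minimizer over the positive integers of the map j ↦ j + γ/(12j²). -/
/-- For `γ` strictly between `12k²(k−1)²/(2k−1)` and `12k²(k+1)²/(2k+1)`, the integer
`k` is the unique minimizer over positive integers of `j ↦ j + γ/(12j²)`. -/
theorem stmt6 (k : ℕ) (hk : 1 ≤ k) (γ : ℝ)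
    (hγ1 : 12 * (k : ℝ) ^ 2 * ((k : ℝ) - 1) ^ 2 / (2 * (k : ℝ) - 1) < γ)
    (hγ2 : γ < 12 * (k : ℝ) ^ 2 * ((k : ℝ) + 1) ^ 2 / (2 * (k : ℝ) + 1)) :
    ∀ j : ℕ, 1 ≤ j → j ≠ k →
      (k : ℝ) + γ / (12 * (k : ℝ) ^ 2) < (j : ℝ) + γ / (12 * (j : ℝ) ^ 2) := by
  intro j hj hne
  have hk1 : (1:ℝ) ≤ (k:ℝ) := by exact_mod_cast hk
  have hj1 : (1:ℝ) ≤ (j:ℝ) := by exact_mod_cast hj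
  have hkpos : (0:ℝ) < (k:ℝ) := by linarith
  have hjpos : (0:ℝ) < (j:ℝ) := by linarith
  have h2k1 : (0:ℝ) < 2*(k:ℝ) - 1 := by linarith
  have h2k1' : (0:ℝ) < 2*(k:ℝ) + 1 := by linarith
  have hA : 12 * (k:ℝ)^2 * ((k:ℝ)-1)^2 < γ * (2*(k:ℝ)-1) := (div_lt_iff₀ h2k1).mp hγ1
  have hB : γ * (2*(k:ℝ)+1) < 12 * (k:ℝ)^2 * ((k:ℝ)+1)^2 := (lt_div_iff₀ h2k1').mp hγ2
  have hγpos : 0 < γ := by nlinarith [sq_nonneg ((k:ℝ) * ((k:ℝ)-1))]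
  rw [← sub_pos]
  have hjne : (j:ℝ) ≠ 0 := ne_of_gt hjpos
  have hkne : (k:ℝ) ≠ 0 := ne_of_gt hkpos
  have expand : ((j:ℝ) + γ/(12*(j:ℝ)^2)) - ((k:ℝ) + γ/(12*(k:ℝ)^2))
      = (((j:ℝ)-(k:ℝ)) * (12*(j:ℝ)^2*(k:ℝ)^2 - γ*((j:ℝ)+(k:ℝ)))) / (12*(j:ℝ)^2*(k:ℝ)^2) := by
    field_simp
    ring
  rw [expand]
  apply div_pos _ (by positivity)
  rcases lt_or_gt_of_ne hne with h | h
  · -- j < k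
    have hjk : (j:ℝ) + 1 ≤ (k:ℝ) := by exact_mod_cast Nat.succ_le_of_lt h
    have key1 : (j:ℝ)^2*(2*(k:ℝ)-1) ≤ ((k:ℝ)-1)^2*((j:ℝ)+(k:ℝ)) := by
      nlinarith [mul_nonneg (by linarith : (0:ℝ) ≤ (k:ℝ)-1-(j:ℝ))
        (by nlinarith : (0:ℝ) ≤ (2*(k:ℝ)-1)*(j:ℝ) + (k:ℝ)*((k:ℝ)-1))]
    have hfac : 12*(j:ℝ)^2*(k:ℝ)^2 - γ*((j:ℝ)+(k:ℝ)) < 0 := by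
      nlinarith [mul_lt_mul_of_pos_right hA (by linarith : (0:ℝ) < (j:ℝ)+(k:ℝ)),
        mul_le_mul_of_nonneg_left key1 (by positivity : (0:ℝ) ≤ 12*(k:ℝ)^2)]
    exact mul_pos_of_neg_of_neg (by linarith) hfac
  · -- j > k
    have hjk : (k:ℝ) + 1 ≤ (j:ℝ) := by exact_mod_cast Nat.succ_le_of_lt h
    have key2 : ((k:ℝ)+1)^2*((j:ℝ)+(k:ℝ)) ≤ (j:ℝ)^2*(2*(k:ℝ)+1) := by
      nlinarith [mul_nonneg (by linarith : (0:ℝ) ≤ (j:ℝ)-((k:ℝ)+1))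
        (by nlinarith : (0:ℝ) ≤ (2*(k:ℝ)+1)*(j:ℝ) + (k:ℝ)*((k:ℝ)+1))]
    have hfac : 0 < 12*(j:ℝ)^2*(k:ℝ)^2 - γ*((j:ℝ)+(k:ℝ)) := by
      have c1 := mul_lt_mul_of_pos_right hB (by linarith : (0:ℝ) < (j:ℝ)+(k:ℝ))
      have c2 := mul_le_mul_of_nonneg_left key2 (by positivity : (0:ℝ) ≤ 12*(k:ℝ)^2)
      have c3 : γ*((j:ℝ)+(k:ℝ)) * (2*(k:ℝ)+1) < 12*(j:ℝ)^2*(k:ℝ)^2 * (2*(k:ℝ)+1) := by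
        linarith [c1, c2]
      have := lt_of_mul_lt_mul_right c3 (le_of_lt h2k1')
      linarith
    exact mul_pos (by linarith) hfac
end

section
/- Let k be a positive integer, γ > 0, and 0 < ε < π√(k/(2γ)). Let a₁,…,a_k be real numbers with a₁ + … + a_k = 0, set α_j = a₁ + … + a_j, and let g₁,…,g_k : [0,ε] → ℝ be continuously differentiable functions with ∫₀^ε g_j(x) dx = 0 for each j. If not all of the a_j are zero or not all of the g_j vanish identically, then Σ_{j=1}^k ∫₀^ε g_j'(x)² dx − (2γ/k) Σ_{j=1}^k ∫₀^ε g_j(x)² dx + (2γε/k)[4(α₁² + … + α_{k−1}²) − (a₁² + … + a_k²)] > 0. -/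
/-!
Each mean-zero `g_j` satisfies the Wirtinger inequality `(π/ε)² ∫ g_j² ≤ ∫ g_j'²`: apply
Parseval's identity to the even `2ε`-periodic extension of `g_j`, whose Fourier coefficients are
those of its derivative divided by `2πin/(2ε)`, and whose zeroth coefficient vanishes. Since
`ε < π√(k/(2γ))` means `2γ/k < (π/ε)²`, the `g`-part of the expression is nonnegative, and
positive unless all `g_j` vanish. Writing `a_j = α_j - α_{j-1}` with `α_0 = α_k = 0`, the
parallelogram law gives `4 Σ α_j² - Σ a_j² = Σ (α_j + α_{j-1})²`, which vanishes only when
all `α_j`, hence all `a_j`, are zero.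
-/

open MeasureTheory intervalIntegral Set Real
open scoped Interval Topology

theorem ContinuousOn.memLp_restrict_of_isCompact {α E : Type*} [TopologicalSpace α]
    [MeasurableSpace α] [OpensMeasurableSpace α] [NormedAddCommGroup E] {μ : Measure α}
    [IsFiniteMeasureOnCompacts μ] {s : Set α} {f : α → E} (hf : ContinuousOn f s)
    (hs : IsCompact s) (h's : MeasurableSet s) (p : ENNReal) :
    MemLp f p (μ.restrict s) := by
  have : IsFiniteMeasure (μ.restrict s) := isFiniteMeasure_restrict.mpr hs.measure_lt_top.ne
  obtain ⟨C, hC⟩ := hs.exists_bound_of_continuousOn hf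
  exact .of_bound (hf.aestronglyMeasurable_of_isCompact hs h's) C
    (ae_restrict_of_forall_mem h's hC)

theorem two_pi_mul_abs_mul_norm_fourierCoeffOn {a b : ℝ} (hab : a < b) {f f' : ℝ → ℂ}
    {n : ℤ} (hn : n ≠ 0) (hf : ContinuousOn f (Icc a b)) (hfab : f b = f a)
    (hff' : ∀ x ∈ Ioo a b, HasDerivWithinAt f (f' x) (Ioi x) x)
    (hf' : IntervalIntegrable f' volume a b) :
    2 * π * |(n : ℝ)| * ‖fourierCoeffOn hab f n‖ =
      (b - a) * ‖fourierCoeffOn hab f' n‖ := by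
  rw [fourierCoeffOn_of_hasDeriv_right hab hn (by rwa [uIcc_of_lt hab])
    (by rwa [min_eq_left hab.le, max_eq_right hab.le]) hf', hfab, sub_self, mul_zero, zero_sub]
  simp only [← Complex.ofReal_sub, norm_mul, norm_neg, norm_div, norm_one, Complex.norm_real,
    Complex.norm_I, Complex.norm_intCast, Complex.norm_ofNat, Real.norm_eq_abs, abs_of_pos pi_pos,
    abs_of_pos (sub_pos.mpr hab)]
  field_simp

theorem fourierCoeffOn_zero_eq_zero {a b : ℝ} (hab : a < b) {f : ℝ → ℂ}
    (hmean : ∫ x in a..b, f x = 0) : fourierCoeffOn hab f 0 = 0 := by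
  simp [fourierCoeffOn_eq_integral, hmean]

theorem wirtinger_periodic {a b : ℝ} (hab : a < b) {f f' : ℝ → ℂ}
    (hf : ContinuousOn f (Icc a b)) (hfab : f b = f a)
    (hff' : ∀ x ∈ Ioo a b, HasDerivWithinAt f (f' x) (Ioi x) x)
    (hf' : MemLp f' 2 (volume.restrict (Ioc a b))) (hmean : ∫ x in a..b, f x = 0) :
    (2 * π / (b - a)) ^ 2 * ∫ x in a..b, ‖f x‖ ^ 2 ≤ ∫ x in a..b, ‖f' x‖ ^ 2 := by
  have hba : 0 < b - a := sub_pos.mpr hab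
  have hf'int : IntervalIntegrable f' volume a b :=
    (intervalIntegrable_iff_integrableOn_Ioc_of_le hab.le).mpr (hf'.integrable one_le_two)
  have hfL2 : MemLp f 2 (volume.restrict (Ioc a b)) :=
    (hf.memLp_restrict_of_isCompact isCompact_Icc measurableSet_Icc 2).mono_measure
      (Measure.restrict_mono Ioc_subset_Icc_self le_rfl)
  have hterm : ∀ n : ℤ, (2 * π / (b - a)) ^ 2 * ‖fourierCoeffOn hab f n‖ ^ 2
      ≤ ‖fourierCoeffOn hab f' n‖ ^ 2 := by
    intro n
    rcases eq_or_ne n 0 with rfl | hn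
    · simp [fourierCoeffOn_zero_eq_zero hab hmean]
    have hrel := two_pi_mul_abs_mul_norm_fourierCoeffOn hab hn hf hfab hff' hf'int
    have hn1 : (1 : ℝ) ≤ |(n : ℝ)| := by exact_mod_cast Int.one_le_abs hn
    rw [div_pow, div_mul_eq_mul_div, div_le_iff₀ (by positivity), ← mul_pow, ← mul_pow,
      mul_comm _ (b - a), ← hrel]
    gcongr ?_ ^ 2
    rw [mul_right_comm _ |(n : ℝ)|]
    exact le_mul_of_one_le_right (by positivity) hn1
  have hle := hasSum_le hterm ((hasSum_sq_fourierCoeffOn hab hfL2).mul_left _)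
    (hasSum_sq_fourierCoeffOn hab hf')
  rw [smul_eq_mul, smul_eq_mul, mul_left_comm, mul_le_mul_iff_right₀ (inv_pos.mpr hba)] at hle
  exact hle

theorem integral_comp_abs_eq_two_mul {ψ : ℝ → ℝ} {L : ℝ} (hL : 0 ≤ L)
    (hψ : ContinuousOn ψ (Icc 0 L)) : ∫ x in -L..L, ψ |x| = 2 * ∫ x in 0..L, ψ x := by
  have hcont : ContinuousOn (fun x => ψ |x|) (Icc (-L) L) :=
    hψ.comp continuous_abs.continuousOn fun x hx => ⟨abs_nonneg x, abs_le.mpr hx⟩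
  have hright : ∫ x in 0..L, ψ |x| = ∫ x in 0..L, ψ x :=
    integral_congr fun x hx => by rw [uIcc_of_le hL] at hx; rw [abs_of_nonneg hx.1]
  have hleft : ∫ x in -L..0, ψ |x| = ∫ x in 0..L, ψ |x| := by
    simpa only [neg_zero, abs_neg] using (integral_comp_neg (a := 0) (b := L) fun x => ψ |x|).symm
  rw [← integral_add_adjacent_intervals (b := 0), hleft, hright, two_mul]
  all_goals
    refine (hcont.mono ?_).intervalIntegrable
    rw [uIcc_of_le (by linarith)]
    exact Icc_subset_Icc (by linarith) (by linarith)

noncomputable def oddExtension (φ : ℝ → ℝ) (x : ℝ) : ℝ :=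
  if x < 0 then -φ (-x) else φ x

theorem oddExtension_sq (φ : ℝ → ℝ) (x : ℝ) : oddExtension φ x ^ 2 = φ |x| ^ 2 := by
  unfold oddExtension
  split_ifs with hx
  · rw [neg_sq, abs_of_neg hx]
  · rw [abs_of_nonneg (not_lt.mp hx)]

theorem hasDerivWithinAt_Ioi_comp_abs {L : ℝ} {g g' : ℝ → ℝ}
    (hg : ∀ x ∈ Icc 0 L, HasDerivWithinAt g (g' x) (Icc 0 L) x) {x : ℝ}
    (hx : x ∈ Ioo (-L) L) :
    HasDerivWithinAt (fun y => g |y|) (oddExtension g' x) (Ioi x) x := by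
  unfold oddExtension
  split_ifs with hx0
  · have hgx : HasDerivAt g (g' (-x)) (-x) :=
      (hg (-x) ⟨by linarith, by linarith [hx.1]⟩).hasDerivAt
        (Icc_mem_nhds (by linarith) (by linarith [hx.1]))
    have hneg : HasDerivAt (fun y => g (-y)) (-g' (-x)) x := by
      simpa [Function.comp_def] using hgx.comp x (hasDerivAt_neg x)
    refine (hneg.congr_of_eventuallyEq ?_).hasDerivWithinAt
    filter_upwards [Iio_mem_nhds hx0] with y hy
    rw [abs_of_neg hy]
  · rw [not_lt] at hx0
    have hsub : Icc 0 L ∈ 𝓝[>] x :=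
      Filter.mem_of_superset (Ioo_mem_nhdsGT hx.2)
        (Ioo_subset_Icc_self.trans (Icc_subset_Icc_left hx0))
    refine ((hg x ⟨hx0, hx.2.le⟩).mono_of_mem_nhdsWithin hsub).congr_of_eventuallyEq ?_
      (by rw [abs_of_nonneg hx0])
    filter_upwards [self_mem_nhdsWithin] with y hy
    rw [abs_of_nonneg (hx0.trans (le_of_lt hy))]

theorem wirtinger_periodic_real {a b : ℝ} (hab : a < b) {f f' : ℝ → ℝ}
    (hf : ContinuousOn f (Icc a b)) (hfab : f b = f a)
    (hff' : ∀ x ∈ Ioo a b, HasDerivWithinAt f (f' x) (Ioi x) x)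
    (hf' : MemLp f' 2 (volume.restrict (Ioc a b))) (hmean : ∫ x in a..b, f x = 0) :
    (2 * π / (b - a)) ^ 2 * ∫ x in a..b, f x ^ 2 ≤ ∫ x in a..b, f' x ^ 2 := by
  have h := wirtinger_periodic hab (f := fun x => (f x : ℂ)) (f' := fun x => (f' x : ℂ))
    (Complex.continuous_ofReal.comp_continuousOn hf) (by rw [hfab])
    (fun x hx => (hff' x hx).ofReal_comp) hf'.ofReal (by rw [integral_ofReal, hmean]; simp)
  simpa only [Complex.norm_real, Real.norm_eq_abs, sq_abs] using h

theorem memLp_oddExtension {L : ℝ} (hL : 0 < L) {φ : ℝ → ℝ}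
    (hφ : ContinuousOn φ (Icc 0 L)) (p : ENNReal) :
    MemLp (oddExtension φ) p (volume.restrict (Ioc (-L) L)) := by
  obtain ⟨C, hC⟩ := isCompact_Icc.exists_bound_of_continuousOn hφ
  have hmeas : AEStronglyMeasurable (oddExtension φ) (volume.restrict (Ioc (-L) L)) := by
    rw [← Ioo_union_Icc_eq_Ioc (neg_lt_zero.mpr hL) hL.le, aestronglyMeasurable_union_iff]
    constructor
    · refine ContinuousOn.aestronglyMeasurable ?_ measurableSet_Ioo
      refine ((hφ.comp continuous_neg.continuousOn fun x hx => ?_).neg).congr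
        fun x hx => if_pos hx.2
      exact ⟨by linarith [hx.2], by linarith [hx.1]⟩
    · exact (hφ.congr fun x hx => if_neg (not_lt.mpr hx.1)).aestronglyMeasurable
        measurableSet_Icc
  refine MemLp.of_bound hmeas C (ae_restrict_of_forall_mem measurableSet_Ioc fun x hx => ?_)
  unfold oddExtension
  split_ifs with hx0
  · rw [norm_neg]
    exact hC _ ⟨by linarith, by linarith [hx.1]⟩
  · exact hC _ ⟨not_lt.mp hx0, hx.2⟩

theorem wirtinger_of_integral_eq_zero {L : ℝ} (hL : 0 < L) {g g' : ℝ → ℝ}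
    (hderiv : ∀ x ∈ Icc 0 L, HasDerivWithinAt g (g' x) (Icc 0 L) x)
    (hcont : ContinuousOn g' (Icc 0 L)) (hmean : ∫ x in 0..L, g x = 0) :
    (π / L) ^ 2 * ∫ x in 0..L, g x ^ 2 ≤ ∫ x in 0..L, g' x ^ 2 := by
  have hgc : ContinuousOn g (Icc 0 L) := fun x hx => (hderiv x hx).continuousWithinAt
  have h := wirtinger_periodic_real (neg_lt_self hL) (f := fun x => g |x|)
    (hgc.comp continuous_abs.continuousOn fun x hx => ⟨abs_nonneg x, abs_le.mpr hx⟩)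
    (by rw [abs_neg]) (fun x hx => hasDerivWithinAt_Ioi_comp_abs hderiv hx)
    (memLp_oddExtension hL hcont 2)
    (by rw [integral_comp_abs_eq_two_mul hL.le hgc, hmean, mul_zero])
  simp only [oddExtension_sq] at h
  rw [integral_comp_abs_eq_two_mul (ψ := fun x => g x ^ 2) hL.le (hgc.pow 2),
    integral_comp_abs_eq_two_mul (ψ := fun x => g' x ^ 2) hL.le (hcont.pow 2),
    show 2 * π / (L - -L) = π / L by field_simp; ring] at h
  linarith

theorem inv_lt_sq_div_of_lt_mul_sqrt {c q ε : ℝ} (hε0 : 0 < ε) (hε : ε < c * √q) :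
    0 < q⁻¹ ∧ q⁻¹ < (c / ε) ^ 2 := by
  have hsqrt : 0 < √q := by
    by_contra! h
    rw [le_antisymm h (sqrt_nonneg q), mul_zero] at hε
    linarith
  have hq : 0 < q := sqrt_pos.mp hsqrt
  have hsq : ε ^ 2 < c ^ 2 * q := by
    rw [← sq_sqrt hq.le, ← mul_pow]
    exact pow_lt_pow_left₀ hε hε0.le two_ne_zero
  refine ⟨inv_pos.mpr hq, ?_⟩
  rw [div_pow, lt_div_iff₀ (by positivity), inv_mul_lt_iff₀ hq]
  linarith

theorem sum_Icc_sq_add_sq_pred {α : ℕ → ℝ} (h0 : α 0 = 0) (k : ℕ) :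
    ∑ i ∈ Finset.Icc 1 k, (α i ^ 2 + α (i - 1) ^ 2) =
      2 * ∑ i ∈ Finset.Icc 1 (k - 1), α i ^ 2 + α k ^ 2 := by
  induction k with
  | zero => simp [h0]
  | succ k ih =>
    have hpred : ∑ i ∈ Finset.Icc 1 k, α i ^ 2 =
        ∑ i ∈ Finset.Icc 1 (k - 1), α i ^ 2 + α k ^ 2 := by
      rcases Nat.eq_zero_or_pos k with rfl | hk
      · simp [h0]
      · obtain ⟨m, rfl⟩ := Nat.exists_eq_add_of_le' hk
        rw [Finset.sum_Icc_succ_top (by omega), Nat.add_sub_cancel]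
    rw [Finset.sum_Icc_succ_top (by omega), ih, Nat.add_sub_cancel, hpred]
    ring

theorem four_mul_sum_sq_sub_sum_sq_sub_pred {α : ℕ → ℝ} {k : ℕ} (h0 : α 0 = 0)
    (hk : α k = 0) :
    4 * ∑ i ∈ Finset.Icc 1 (k - 1), α i ^ 2 - ∑ i ∈ Finset.Icc 1 k, (α i - α (i - 1)) ^ 2
      = ∑ i ∈ Finset.Icc 1 k, (α i + α (i - 1)) ^ 2 := by
  have hparallelogram :
      ∑ i ∈ Finset.Icc 1 k, ((α i + α (i - 1)) ^ 2 + (α i - α (i - 1)) ^ 2)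
        = 2 * ∑ i ∈ Finset.Icc 1 k, (α i ^ 2 + α (i - 1) ^ 2) := by
    rw [Finset.mul_sum]
    exact Finset.sum_congr rfl fun _ _ => by ring
  rw [sub_eq_iff_eq_add, ← Finset.sum_add_distrib, hparallelogram, sum_Icc_sq_add_sq_pred h0, hk]
  ring

theorem sum_sq_add_pred_pos {α : ℕ → ℝ} {k i : ℕ} (h0 : α 0 = 0)
    (hi : i ∈ Finset.Icc 1 k) (hne : α i - α (i - 1) ≠ 0) :
    0 < ∑ i ∈ Finset.Icc 1 k, (α i + α (i - 1)) ^ 2 := by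
  refine (Finset.sum_nonneg fun _ _ => sq_nonneg _).lt_of_ne fun h => hne ?_
  have hstep : ∀ j ∈ Finset.Icc 1 k, α j = -α (j - 1) := fun j hj =>
    eq_neg_of_add_eq_zero_left (pow_eq_zero_iff two_ne_zero |>.mp
      ((Finset.sum_eq_zero_iff_of_nonneg fun _ _ => sq_nonneg _).mp h.symm j hj))
  have hzero : ∀ j ≤ k, α j = 0 := by
    intro j hj
    induction j with
    | zero => exact h0
    | succ j ih =>
      rw [hstep (j + 1) (Finset.mem_Icc.mpr ⟨by omega, hj⟩), Nat.add_sub_cancel, ih (by omega),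
        neg_zero]
  have hik := (Finset.mem_Icc.mp hi).2
  rw [hzero i hik, hzero (i - 1) (by omega), sub_zero]

theorem sub_pred_eq_of_eq_sum_Icc {a α : ℕ → ℝ}
    (hα : ∀ i, α i = ∑ l ∈ Finset.Icc 1 i, a l) {i : ℕ} (hi : 1 ≤ i) :
    α i - α (i - 1) = a i := by
  obtain ⟨m, rfl⟩ := Nat.exists_eq_add_of_le' hi
  rw [hα, hα, Finset.sum_Icc_succ_top (by omega), Nat.add_sub_cancel, add_sub_cancel_left]

theorem stmt16_general (k : ℕ) (γ : ℝ)
    (ε : ℝ) (hε0 : 0 < ε) (hε : ε < Real.pi * Real.sqrt ((k : ℝ) / (2 * γ)))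
    (a : ℕ → ℝ) (hsum : ∑ i ∈ Finset.Icc 1 k, a i = 0)
    (α : ℕ → ℝ) (hα : ∀ i, α i = ∑ l ∈ Finset.Icc 1 i, a l)
    (g g' : ℕ → ℝ → ℝ)
    (hderiv : ∀ i ∈ Finset.Icc 1 k, ∀ x ∈ Set.Icc (0 : ℝ) ε,
      HasDerivWithinAt (g i) (g' i x) (Set.Icc (0 : ℝ) ε) x)
    (hcont : ∀ i ∈ Finset.Icc 1 k, ContinuousOn (g' i) (Set.Icc (0 : ℝ) ε))
    (hmean : ∀ i ∈ Finset.Icc 1 k, ∫ x in (0 : ℝ)..ε, g i x = 0)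
    (hnontriv : (∃ i ∈ Finset.Icc 1 k, a i ≠ 0) ∨
      (∃ i ∈ Finset.Icc 1 k, ∃ x ∈ Set.Icc (0 : ℝ) ε, g i x ≠ 0)) :
    0 < (∑ i ∈ Finset.Icc 1 k, ∫ x in (0 : ℝ)..ε, (g' i x) ^ 2)
        - (2 * γ / (k : ℝ)) * (∑ i ∈ Finset.Icc 1 k, ∫ x in (0 : ℝ)..ε, (g i x) ^ 2)
        + (2 * γ * ε / (k : ℝ)) * (4 * (∑ i ∈ Finset.Icc 1 (k - 1), (α i) ^ 2)
            - ∑ i ∈ Finset.Icc 1 k, (a i) ^ 2) := by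
  obtain ⟨hc, hcπ⟩ := inv_lt_sq_div_of_lt_mul_sqrt hε0 hε
  rw [inv_div] at hc hcπ
  have h0 : α 0 = 0 := by simp [hα]
  have hQ : 4 * ∑ i ∈ Finset.Icc 1 (k - 1), α i ^ 2 - ∑ i ∈ Finset.Icc 1 k, a i ^ 2
      = ∑ i ∈ Finset.Icc 1 k, (α i + α (i - 1)) ^ 2 := by
    rw [← four_mul_sum_sq_sub_sum_sq_sub_pred h0 (by rw [hα, hsum])]
    congr 1
    exact Finset.sum_congr rfl fun i hi => by
      rw [sub_pred_eq_of_eq_sum_Icc hα (Finset.mem_Icc.mp hi).1]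
  have hwirt : (π / ε) ^ 2 * ∑ i ∈ Finset.Icc 1 k, ∫ x in (0 : ℝ)..ε, g i x ^ 2
      ≤ ∑ i ∈ Finset.Icc 1 k, ∫ x in (0 : ℝ)..ε, g' i x ^ 2 := by
    rw [Finset.mul_sum]
    exact Finset.sum_le_sum fun i hi =>
      wirtinger_of_integral_eq_zero hε0 (hderiv i hi) (hcont i hi) (hmean i hi)
  have hnonneg : ∀ i, 0 ≤ ∫ x in (0 : ℝ)..ε, g i x ^ 2 := fun i =>
    integral_nonneg hε0.le fun x _ => sq_nonneg _
  have hB := Finset.sum_nonneg fun i (_ : i ∈ Finset.Icc 1 k) => hnonneg i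
  have hQnonneg :=
    Finset.sum_nonneg fun i (_ : i ∈ Finset.Icc 1 k) => sq_nonneg (α i + α (i - 1))
  rw [show 2 * γ * ε / (k : ℝ) = 2 * γ / k * ε by ring, hQ]
  rcases hnontriv with ⟨i, hi, hai⟩ | ⟨i, hi, x, hx, hgx⟩
  · have hQpos := sum_sq_add_pred_pos h0 hi
      (by rwa [sub_pred_eq_of_eq_sum_Icc hα (Finset.mem_Icc.mp hi).1])
    linarith [mul_le_mul_of_nonneg_right hcπ.le hB, mul_pos (mul_pos hc hε0) hQpos]
  · have hgi : 0 < ∫ x in (0 : ℝ)..ε, g i x ^ 2 :=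
      integral_pos hε0 (ContinuousOn.pow (fun y hy => (hderiv i hi y hy).continuousWithinAt) 2)
        (fun y _ => sq_nonneg _) ⟨x, hx, by positivity⟩
    have hBpos := hgi.trans_le (Finset.single_le_sum (fun j _ => hnonneg j) hi)
    linarith [mul_lt_mul_of_pos_right hcπ hBpos, mul_nonneg (mul_nonneg hc.le hε0.le) hQnonneg]

/-- Positivity of the lower bound for the second variation of the nonlocal
isoperimetric energy about the lamellar critical point `u_k` on the thin rectangle
`(0,ε)×(0,1)` when `ε < π√(k/(2γ))`: for a nontrivial perturbation decomposed on the
`j`-th interface as `a_j + g_j` with `Σa_j = 0` and each `g_j` mean-zero and `C¹`,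
`Σ∫g_j'² − (2γ/k)Σ∫g_j² + (2γε/k)[4Σα_j² − Σa_j²] > 0`, where `α_j = a₁+…+a_j`. -/
theorem stmt16 (k : ℕ) (hk : 1 ≤ k) (γ : ℝ) (hγ : 0 < γ)
    (ε : ℝ) (hε0 : 0 < ε) (hε : ε < Real.pi * Real.sqrt ((k : ℝ) / (2 * γ)))
    (a : ℕ → ℝ) (hsum : ∑ i ∈ Finset.Icc 1 k, a i = 0)
    (α : ℕ → ℝ) (hα : ∀ i, α i = ∑ l ∈ Finset.Icc 1 i, a l)
    (g g' : ℕ → ℝ → ℝ)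
    (hderiv : ∀ i ∈ Finset.Icc 1 k, ∀ x ∈ Set.Icc (0 : ℝ) ε,
      HasDerivWithinAt (g i) (g' i x) (Set.Icc (0 : ℝ) ε) x)
    (hcont : ∀ i ∈ Finset.Icc 1 k, ContinuousOn (g' i) (Set.Icc (0 : ℝ) ε))
    (hmean : ∀ i ∈ Finset.Icc 1 k, ∫ x in (0 : ℝ)..ε, g i x = 0)
    (hnontriv : (∃ i ∈ Finset.Icc 1 k, a i ≠ 0) ∨
      (∃ i ∈ Finset.Icc 1 k, ∃ x ∈ Set.Icc (0 : ℝ) ε, g i x ≠ 0)) :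
    0 < (∑ i ∈ Finset.Icc 1 k, ∫ x in (0 : ℝ)..ε, (g' i x) ^ 2)
        - (2 * γ / (k : ℝ)) * (∑ i ∈ Finset.Icc 1 k, ∫ x in (0 : ℝ)..ε, (g i x) ^ 2)
        + (2 * γ * ε / (k : ℝ)) * (4 * (∑ i ∈ Finset.Icc 1 (k - 1), (α i) ^ 2)
            - ∑ i ∈ Finset.Icc 1 k, (a i) ^ 2) :=
  stmt16_general k γ ε hε0 hε a hsum α hα g g' hderiv hcont hmean hnontriv
end
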